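/- Let ξ = (ξ_n)_{n∈ℕ} be a sequence in H such that D(C_ξ) is dense in H. If the synthesis operator D_ξ is closed, then T_ξ = S_ξ (equality of operators, including domains). -/

import Mathlib

noncomputable section
open scoped InnerProductSpace ComplexInnerProductSpace ComplexConjugate ENNReal
open Filter Topology

/- `H` is a separable complex Hilbert space. -/
variable {H : Type} [NormedAddCommGroup H] [InnerProductSpace ℂ H] [CompleteSpace H]
  [TopologicalSpace.SeparableSpace H]

/-- The space `ℓ²(ℕ)` of square-summable complex sequences. -/
abbrev l2 : Type := lp (fun _ : ℕ => ℂ) 2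

/-- The domain of the analysis operator `C_ξ`:
`D(C_ξ) = {f ∈ H : Σ_n |⟨f,ξ_n⟩|² < ∞}`.  (The paper's inner product `⟨f,ξ_n⟩`, linear in `f`,
is `⟪ξ n, f⟫_ℂ` in Mathlib's convention.) -/
def domC (ξ : ℕ → H) : Set H := {f : H | Memℓp (fun n => ⟪ξ n, f⟫_ℂ) 2}

open Classical in
/-- The analysis operator `C_ξ f = (⟨f,ξ_n⟩)_n`, with junk value `0` outside of its domain. -/
def Cfun (ξ : ℕ → H) (f : H) : l2 :=
  if h : Memℓp (fun n => ⟪ξ n, f⟫_ℂ) 2 then ⟨_, h⟩ else 0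

/-- The domain of the synthesis operator `D_ξ`:
`D(D_ξ) = {(c_n) ∈ ℓ² : Σ_n c_n ξ_n converges in norm in H}`. -/
def domD (ξ : ℕ → H) : Set l2 :=
  {c : l2 | ∃ L : H, Tendsto (fun k : ℕ => ∑ n ∈ Finset.range k, c n • ξ n) atTop (𝓝 L)}

/-- The domain of the frame operator `S_ξ`:
`D(S_ξ) = {f ∈ H : Σ_n ⟨f,ξ_n⟩ ξ_n converges in norm in H}`. -/
def domS (ξ : ℕ → H) : Set H :=
  {f : H | ∃ L : H, Tendsto (fun k : ℕ => ∑ n ∈ Finset.range k, ⟪ξ n, f⟫_ℂ • ξ n) atTop (𝓝 L)}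

/-- The domain of the generalized frame operator `T_ξ`: those `f ∈ D(C_ξ)` for which there is
`h` in `H_ξ = closure D(C_ξ)` with `Σ_n ⟨f,ξ_n⟩⟨ξ_n,g⟩ = ⟨h,g⟩` for all `g ∈ D(C_ξ)`. -/
def domT (ξ : ℕ → H) : Set H :=
  {f : H | f ∈ domC ξ ∧ ∃ h ∈ closure (domC ξ), ∀ g ∈ domC ξ,
    ∑' n : ℕ, ⟪ξ n, f⟫_ℂ * ⟪g, ξ n⟫_ℂ = ⟪g, h⟫_ℂ}

/-- The domain of `Q_ξ`: those `(c_n) ∈ ℓ²` whose partial sums `Σ_{n<k} c_n ξ_n`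
converge weakly in `H`. -/
def domQ (ξ : ℕ → H) : Set l2 :=
  {c : l2 | ∃ L : H, ∀ y : H,
    Tendsto (fun k : ℕ => ⟪y, ∑ n ∈ Finset.range k, c n • ξ n⟫_ℂ) atTop (𝓝 ⟪y, L⟫_ℂ)}

/-- The domain of the weak frame operator `W_ξ`: those `f ∈ H` whose partial sums
`Σ_{n<k} ⟨f,ξ_n⟩ ξ_n` converge weakly in `H`. -/
def domW (ξ : ℕ → H) : Set H :=
  {f : H | ∃ L : H, ∀ y : H,
    Tendsto (fun k : ℕ => ⟪y, ∑ n ∈ Finset.range k, ⟪ξ n, f⟫_ℂ • ξ n⟫_ℂ) atTop (𝓝 ⟪y, L⟫_ℂ)}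

/-!
The pairs `(c, y)` with `Σ c_n ξ_n → y` form the graph `G` of `D_ξ`, a closed subspace of
`ℓ² ⊕ H`. Testing `(x, y) ∈ Gᗮ` against `(e_n, ξ_n) ∈ G` gives `x = -C_ξ y`, so the identity
defining `T_ξ f = h` says exactly that `(C_ξ f, h) ⟂ Gᗮ`, i.e. `(C_ξ f, h) ∈ Gᗮᗮ = G`: the
series `Σ ⟨f,ξ_n⟩ ξ_n` converges to `h`. Conversely, pairing a convergent series
`Σ ⟨f,ξ_n⟩ ξ_n` with `f` shows `f ∈ D(C_ξ)`, and pairing it with `g ∈ D(C_ξ)` gives the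
identity defining `T_ξ`.
-/

section Synthesis

variable {E : Type} [NormedAddCommGroup E] [InnerProductSpace ℂ E] (ξ : ℕ → E)

theorem inner_sum_inner_smul (f g : E) (k : ℕ) :
    ⟪g, ∑ n ∈ Finset.range k, ⟪ξ n, f⟫_ℂ • ξ n⟫_ℂ
      = ∑ n ∈ Finset.range k, ⟪ξ n, f⟫_ℂ * ⟪g, ξ n⟫_ℂ := by
  simp only [inner_sum, inner_smul_right]

theorem summable_inner_mul_inner {f g : E} (hf : f ∈ domC ξ) (hg : g ∈ domC ξ) :
    Summable fun n => ⟪ξ n, f⟫_ℂ * ⟪g, ξ n⟫_ℂ := by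
  refine (lp.summable_inner (𝕜 := ℂ) (⟨_, hg⟩ : l2) ⟨_, hf⟩).congr fun n => ?_
  simp only [RCLike.inner_apply, inner_conj_symm]

theorem domS_subset_domC : domS ξ ⊆ domC ξ := by
  rintro f ⟨L, hL⟩
  have h_sq : ∀ k, ⟪f, ∑ n ∈ Finset.range k, ⟪ξ n, f⟫_ℂ • ξ n⟫_ℂ
      = ((∑ n ∈ Finset.range k, ‖⟪ξ n, f⟫_ℂ‖ ^ 2 : ℝ) : ℂ) := fun k => by
    rw [inner_sum_inner_smul]
    push_cast
    refine Finset.sum_congr rfl fun n _ => ?_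
    rw [← inner_conj_symm f (ξ n), Complex.mul_conj']
  have h_lim : Tendsto (fun k => ∑ n ∈ Finset.range k, ‖⟪ξ n, f⟫_ℂ‖ ^ 2) atTop
      (𝓝 (⟪f, L⟫_ℂ).re) := by
    simpa only [Function.comp_def, h_sq, Complex.ofReal_re] using
      (Complex.continuous_re.tendsto _).comp ((tendsto_const_nhds (x := f)).inner hL)
  have h_mono : Monotone fun k => ∑ n ∈ Finset.range k, ‖⟪ξ n, f⟫_ℂ‖ ^ 2 := fun a b hab =>
    Finset.sum_le_sum_of_subset_of_nonneg (Finset.range_subset_range.2 hab)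
      fun n _ _ => sq_nonneg _
  refine memℓp_gen ?_
  simpa only [ENNReal.toReal_ofNat, Real.rpow_two] using
    summable_of_sum_range_le (fun n => sq_nonneg _) fun k => h_mono.ge_of_tendsto h_lim k

theorem tsum_inner_mul_inner_eq_of_tendsto {f g L : E}
    (hf : Tendsto (fun k => ∑ n ∈ Finset.range k, ⟪ξ n, f⟫_ℂ • ξ n) atTop (𝓝 L))
    (hg : g ∈ domC ξ) :
    ∑' n, ⟪ξ n, f⟫_ℂ * ⟪g, ξ n⟫_ℂ = ⟪g, L⟫_ℂ :=
  tendsto_nhds_unique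
    (summable_inner_mul_inner ξ (domS_subset_domC ξ ⟨L, hf⟩) hg).hasSum.tendsto_sum_nat
    ((tendsto_const_nhds.inner hf).congr (inner_sum_inner_smul ξ f g))

def synthesisGraph : Submodule ℂ (WithLp 2 (l2 × E)) where
  carrier := {p | Tendsto (fun k => ∑ n ∈ Finset.range k, p.fst n • ξ n) atTop (𝓝 p.snd)}
  add_mem' {p q} hp hq := (hp.add hq).congr fun k => by
    simp [Finset.sum_add_distrib, add_smul]
  zero_mem' := by simp
  smul_mem' r p hp := (hp.const_smul r).congr fun k => by
    simp [Finset.smul_sum, smul_smul]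

theorem isClosed_synthesisGraph {Dfun : l2 → E}
    (hD : ∀ c ∈ domD ξ,
      Tendsto (fun k : ℕ => ∑ n ∈ Finset.range k, c n • ξ n) atTop (𝓝 (Dfun c)))
    (hDclosed : IsClosed {p : l2 × E | p.1 ∈ domD ξ ∧ Dfun p.1 = p.2}) :
    IsClosed (synthesisGraph ξ : Set (WithLp 2 (l2 × E))) := by
  convert hDclosed.preimage (WithLp.prod_continuous_ofLp 2 l2 E) using 1
  ext p
  constructor
  · intro hp
    exact ⟨⟨_, hp⟩, tendsto_nhds_unique (hD _ ⟨_, hp⟩) hp⟩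
  · rintro ⟨hp, hDp⟩
    have h := hD _ hp
    rwa [hDp] at h

theorem toLp_single_mem_synthesisGraph (n : ℕ) :
    WithLp.toLp 2 (lp.single 2 n (1 : ℂ), ξ n) ∈ synthesisGraph ξ := by
  refine tendsto_nhds_of_eventually_eq ?_
  filter_upwards [eventually_gt_atTop n] with k hk
  rw [Finset.sum_eq_single_of_mem n (Finset.mem_range.2 hk) fun m _ hm => by
    simp [hm]]
  simp

theorem fst_apply_eq_of_mem_orthogonal_synthesisGraph {x : WithLp 2 (l2 × E)}
    (hx : x ∈ (synthesisGraph ξ)ᗮ) (n : ℕ) : x.fst n = -⟪ξ n, x.snd⟫_ℂ := by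
  have h := Submodule.inner_right_of_mem_orthogonal (toLp_single_mem_synthesisGraph ξ n) hx
  rw [WithLp.prod_inner_apply] at h
  simp only [WithLp.ofLp_fst, lp.inner_single_left, RCLike.inner_apply, map_one, mul_one,
    WithLp.ofLp_snd] at h
  exact eq_neg_of_add_eq_zero_left h

theorem mem_domC_of_mem_orthogonal_synthesisGraph {x : WithLp 2 (l2 × E)}
    (hx : x ∈ (synthesisGraph ξ)ᗮ) : x.snd ∈ domC ξ := by
  have h : (fun n => ⟪ξ n, x.snd⟫_ℂ) = ⇑(-x.fst) := by
    ext n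
    simp [fst_apply_eq_of_mem_orthogonal_synthesisGraph ξ hx n]
  change Memℓp (fun n => ⟪ξ n, x.snd⟫_ℂ) 2
  exact h ▸ lp.memℓp _

theorem tendsto_of_forall_tsum_inner_mul_inner_eq [CompleteSpace E]
    (hG : IsClosed (synthesisGraph ξ : Set (WithLp 2 (l2 × E)))) {f h : E} (hf : f ∈ domC ξ)
    (hh : ∀ g ∈ domC ξ, ∑' n, ⟪ξ n, f⟫_ℂ * ⟪g, ξ n⟫_ℂ = ⟪g, h⟫_ℂ) :
    Tendsto (fun k => ∑ n ∈ Finset.range k, ⟪ξ n, f⟫_ℂ • ξ n) atTop (𝓝 h) := by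
  have hGG : (synthesisGraph ξ)ᗮᗮ = synthesisGraph ξ := by
    rw [Submodule.orthogonal_orthogonal_eq_closure, hG.submodule_topologicalClosure_eq]
  suffices WithLp.toLp 2 ((⟨_, hf⟩ : l2), h) ∈ (synthesisGraph ξ)ᗮᗮ by
    rwa [hGG] at this
  rw [Submodule.mem_orthogonal]
  intro x hx
  have hx_snd := mem_domC_of_mem_orthogonal_synthesisGraph ξ hx
  calc ⟪x, WithLp.toLp 2 ((⟨_, hf⟩ : l2), h)⟫_ℂ
      = ∑' n, -(⟪ξ n, f⟫_ℂ * ⟪x.snd, ξ n⟫_ℂ) + ⟪x.snd, h⟫_ℂ := by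
        rw [WithLp.prod_inner_apply, lp.inner_eq_tsum]
        congr 1
        refine tsum_congr fun n => ?_
        simp [fst_apply_eq_of_mem_orthogonal_synthesisGraph ξ hx n]
    _ = 0 := by rw [tsum_neg, hh _ hx_snd, neg_add_cancel]

end Synthesis

/-- Let `ξ` be a sequence in `H` with `D(C_ξ)` dense.  If the synthesis
operator `D_ξ` is closed, then `T_ξ = S_ξ` (equality of domains included). -/
theorem statement8 (ξ : ℕ → H) (hdense : Dense (domC ξ))
    (Dfun : l2 → H)
    (hD : ∀ c ∈ domD ξ,
      Tendsto (fun k : ℕ => ∑ n ∈ Finset.range k, c n • ξ n) atTop (𝓝 (Dfun c)))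
    (hDclosed : IsClosed {p : l2 × H | p.1 ∈ domD ξ ∧ Dfun p.1 = p.2})
    (Sfun : H → H)
    (hS : ∀ f ∈ domS ξ,
      Tendsto (fun k : ℕ => ∑ n ∈ Finset.range k, ⟪ξ n, f⟫_ℂ • ξ n) atTop (𝓝 (Sfun f)))
    (Tfun : H → H)
    (hT : ∀ f ∈ domT ξ, Tfun f ∈ closure (domC ξ) ∧
      ∀ g ∈ domC ξ, ∑' n : ℕ, ⟪ξ n, f⟫_ℂ * ⟪g, ξ n⟫_ℂ = ⟪g, Tfun f⟫_ℂ) :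
    domT ξ = domS ξ ∧ ∀ f ∈ domT ξ, Tfun f = Sfun f := by
  have hG := isClosed_synthesisGraph ξ hD hDclosed
  have hT_tendsto : ∀ f ∈ domT ξ,
      Tendsto (fun k => ∑ n ∈ Finset.range k, ⟪ξ n, f⟫_ℂ • ξ n) atTop (𝓝 (Tfun f)) :=
    fun f hf => tendsto_of_forall_tsum_inner_mul_inner_eq ξ hG hf.1 (hT f hf).2
  refine ⟨Set.Subset.antisymm (fun f hf => ⟨_, hT_tendsto f hf⟩) fun f hf => ?_,
    fun f hf => tendsto_nhds_unique (hT_tendsto f hf) (hS f ⟨_, hT_tendsto f hf⟩)⟩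
  exact ⟨domS_subset_domC ξ hf, Sfun f, hdense.closure_eq ▸ Set.mem_univ _,
    fun g hg => tsum_inner_mul_inner_eq_of_tendsto ξ (hS f hf) hg⟩
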